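/- Let T be a bounded Fredholm operator of index 0 on a Banach space X with dim ker T = 1, ker T = span{h₀}. Let c ∈ X* with c(h₀) ≠ 0, and suppose b ∈ range T. Then the augmented operator T + b·c is NOT invertible; in fact it is Fredholm of index 0 with nontrivial kernel. -/

import Mathlib

/-!
Write `b = T v`. Then `(T + b·c) x = T (x + c(x) v)`, so the range of `T + b·c` lies in that of
`T`, and conversely `T x = (T + b·c)(x - (c x / c h₀) h₀)`: the range is unchanged. The same
identity shows that the kernel of `T + b·c` is spanned by `w = (1 + c v) h₀ - c(h₀) v`, which is
nonzero because `c w = c h₀`. Kernel and cokernel dimensions are therefore those of `T`.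
-/

open Module

/-- `T` is a Fredholm operator of index `0`. -/
def IsFredholmIdxZero {X Y : Type*} [NormedAddCommGroup X] [NormedSpace ℂ X]
    [NormedAddCommGroup Y] [NormedSpace ℂ Y] (T : X →L[ℂ] Y) : Prop :=
  FiniteDimensional ℂ (LinearMap.ker (T : X →ₗ[ℂ] Y)) ∧
  IsClosed ((LinearMap.range (T : X →ₗ[ℂ] Y) : Submodule ℂ Y) : Set Y) ∧
  FiniteDimensional ℂ (Y ⧸ LinearMap.range (T : X →ₗ[ℂ] Y)) ∧
  finrank ℂ (LinearMap.ker (T : X →ₗ[ℂ] Y)) = finrank ℂ (Y ⧸ LinearMap.range (T : X →ₗ[ℂ] Y))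

namespace LinearMap

variable {K V W : Type*} [Field K] [AddCommGroup V] [Module K V] [AddCommGroup W] [Module K W]
  (T : V →ₗ[K] W) (c : V →ₗ[K] K)

theorem range_add_smulRight_le {b : W} (hb : b ∈ range T) :
    range (T + c.smulRight b) ≤ range T := by
  obtain ⟨v, rfl⟩ := hb
  rintro _ ⟨x, rfl⟩
  exact ⟨x + c x • v, by simp⟩

theorem range_le_range_add_smulRight {h : V} (hh : T h = 0) (hc : c h ≠ 0) (b : W) :
    range T ≤ range (T + c.smulRight b) := by
  rintro _ ⟨x, rfl⟩
  refine ⟨x - (c x / c h) • h, ?_⟩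
  simp [hh, div_mul_cancel₀ _ hc]

theorem range_add_smulRight_eq {h : V} {b : W} (hh : T h = 0) (hc : c h ≠ 0)
    (hb : b ∈ range T) : range (T + c.smulRight b) = range T :=
  le_antisymm (range_add_smulRight_le T c hb) (range_le_range_add_smulRight T c hh hc b)

theorem ker_add_smulRight_eq_span {h v : V} {b : W} (hker : ker T = K ∙ h) (hc : c h ≠ 0)
    (hv : T v = b) : ker (T + c.smulRight b) = K ∙ ((1 + c v) • h - c h • v) := by
  subst hv
  have hh : T h = 0 := by simp [← mem_ker, hker, Submodule.mem_span_singleton_self]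
  apply le_antisymm
  · intro y hy
    have hyv : y + c y • v ∈ ker T := by simpa using hy
    obtain ⟨α, hα⟩ := Submodule.mem_span_singleton.mp (hker ▸ hyv)
    have hαc : α * c h = c y * (1 + c v) := by
      have := congrArg c hα
      simp only [map_smul, map_add, smul_eq_mul] at this
      linear_combination this
    have hcoef : c y / c h * (1 + c v) = α := by
      field_simp
      linear_combination -hαc
    refine Submodule.mem_span_singleton.mpr ⟨c y / c h, ?_⟩
    rw [smul_sub, smul_smul, smul_smul, div_mul_cancel₀ _ hc, hcoef, hα]
    abel
  · rw [Submodule.span_singleton_le_iff_mem, mem_ker]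
    simp only [add_apply, smulRight_apply, map_sub, map_smul, hh]
    module

end LinearMap

theorem IsFredholmIdxZero.of_range_eq_of_finrank_ker_eq {X Y : Type*} [NormedAddCommGroup X]
    [NormedSpace ℂ X] [NormedAddCommGroup Y] [NormedSpace ℂ Y] {S T : X →L[ℂ] Y}
    (hT : IsFredholmIdxZero T)
    (hrange : LinearMap.range (S : X →ₗ[ℂ] Y) = LinearMap.range (T : X →ₗ[ℂ] Y))
    [FiniteDimensional ℂ (LinearMap.ker (S : X →ₗ[ℂ] Y))]
    (hker : finrank ℂ (LinearMap.ker (S : X →ₗ[ℂ] Y)) =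
      finrank ℂ (LinearMap.ker (T : X →ₗ[ℂ] Y))) :
    IsFredholmIdxZero S := by
  obtain ⟨-, hclosed, hcoker, hindex⟩ := hT
  exact ⟨inferInstance, hrange ▸ hclosed, hrange ▸ hcoker, hrange ▸ hker ▸ hindex⟩

theorem stmt12_general {X : Type*} [NormedAddCommGroup X] [NormedSpace ℂ X]
    (T : X →L[ℂ] X) (hT : IsFredholmIdxZero T)
    (h₀ : X) (hker : LinearMap.ker (T : X →ₗ[ℂ] X) = Submodule.span ℂ {h₀})
    (c : X →L[ℂ] ℂ) (hc : c h₀ ≠ 0)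
    (b : X) (hb : b ∈ LinearMap.range (T : X →ₗ[ℂ] X)) :
    ¬ Function.Bijective ⇑(T + c.smulRight b) ∧
    IsFredholmIdxZero (T + c.smulRight b) ∧
    LinearMap.ker ((T + c.smulRight b : X →L[ℂ] X) : X →ₗ[ℂ] X) ≠ ⊥ := by
  set S : X →ₗ[ℂ] X := ((T + c.smulRight b : X →L[ℂ] X) : X →ₗ[ℂ] X)
  have hS : S = (T : X →ₗ[ℂ] X) + (c : X →ₗ[ℂ] ℂ).smulRight b := rfl
  have hh₀ : (T : X →ₗ[ℂ] X) h₀ = 0 := hker.ge (Submodule.mem_span_singleton_self h₀)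
  have hrange : LinearMap.range S = LinearMap.range (T : X →ₗ[ℂ] X) :=
    hS ▸ LinearMap.range_add_smulRight_eq _ _ hh₀ hc hb
  obtain ⟨v, hv⟩ := hb
  set w := (1 + c v) • h₀ - c h₀ • v
  have hcw : c w = c h₀ := by simp only [w, map_sub, map_smul, smul_eq_mul]; ring
  have hw : w ≠ 0 := fun hw => hc (by simpa [hw] using hcw.symm)
  have hkerS : LinearMap.ker S = ℂ ∙ w :=
    hS ▸ LinearMap.ker_add_smulRight_eq_span _ _ hker hc hv
  have hkerS_ne : LinearMap.ker S ≠ ⊥ := by rwa [hkerS, Ne, Submodule.span_singleton_eq_bot]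
  refine ⟨fun hbij => hkerS_ne (LinearMap.ker_eq_bot.mpr hbij.injective), ?_, hkerS_ne⟩
  have : FiniteDimensional ℂ (LinearMap.ker S) := hkerS ▸ inferInstance
  refine hT.of_range_eq_of_finrank_ker_eq hrange ?_
  rw [hkerS, hker, finrank_span_singleton hw, finrank_span_singleton (by rintro rfl; simp at hc)]

/-- If `T` is Fredholm of index 0 with one-dimensional kernel spanned by `h₀`,
`c(h₀) ≠ 0`, but `b ∈ range T`, then `T + b·c` is NOT invertible; in fact it is
Fredholm of index 0 with nontrivial kernel. -/
theorem stmt12 {X : Type*} [NormedAddCommGroup X] [NormedSpace ℂ X] [CompleteSpace X]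
    (T : X →L[ℂ] X) (hT : IsFredholmIdxZero T)
    (h₀ : X) (hh₀ : h₀ ≠ 0) (hker : LinearMap.ker (T : X →ₗ[ℂ] X) = Submodule.span ℂ {h₀})
    (c : X →L[ℂ] ℂ) (hc : c h₀ ≠ 0)
    (b : X) (hb : b ∈ LinearMap.range (T : X →ₗ[ℂ] X)) :
    ¬ Function.Bijective ⇑(T + c.smulRight b) ∧
    IsFredholmIdxZero (T + c.smulRight b) ∧
    LinearMap.ker ((T + c.smulRight b : X →L[ℂ] X) : X →ₗ[ℂ] X) ≠ ⊥ :=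
  stmt12_general T hT h₀ hker c hc b hb
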